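/- arXiv:2006.04048 — 3 statements merged into one kernel-verified Lean document; each statement's English description precedes it below -/
import Mathlib

section
/- Let α, β > 0 and k ∈ ℕ. For every t ∈ [0, 2kα], the triangle waveform satisfies T_k(2kα − t; α, β) = T_k(t; α, β). -/
open Real
open scoped BigOperators

/-- The triangle function `T(t; α, β)`: equals `βt` on `[0, α]`, `2αβ - βt` on `(α, 2α]`,
and `0` otherwise. -/
noncomputable def tri (α β t : ℝ) : ℝ :=
  if 0 ≤ t ∧ t ≤ α then β * t
  else if α < t ∧ t ≤ 2 * α then 2 * α * β - β * t
  else 0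

/-- The triangle waveform `T_k(t; α, β) = Σ_{i=-k+1}^{k} T(t - 2α(i-1); α, β)`. -/
noncomputable def triWave (k : ℕ) (α β t : ℝ) : ℝ :=
  ∑ i ∈ Finset.Icc (-(k : ℤ) + 1) (k : ℤ), tri α β (t - 2 * α * ((i : ℝ) - 1))

/-! The triangle is `T(t) = β · max 0 (α - |t - α|)`, symmetric about `t = α`. Hence
`t ↦ 2kα - t` sends the tooth of index `i` to the tooth of index `k + 1 - i`, turning the sum over
`[-k+1, k]` into one over `[1, 2k]`. For `t ∈ [0, 2kα]` both agree with the sum over `[-k+1, 2k]`: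
the teeth of index `≤ 0` vanish because `t ≥ 0`, those of index `> k` because `t ≤ 2kα`. -/

theorem tri_eq_mul_max (α β t : ℝ) : tri α β t = β * max 0 (α - |t - α|) := by
  unfold tri
  split_ifs with h₁ h₂
  · rw [abs_of_nonpos (by linarith [h₁.2]), max_eq_right (by linarith [h₁.1])]; ring
  · rw [abs_of_pos (by linarith [h₂.1]), max_eq_right (by linarith [h₂.2])]; ring
  · rw [max_eq_left, mul_zero]
    grind [abs_cases]

theorem tri_two_mul_sub (α β t : ℝ) : tri α β (2 * α - t) = tri α β t := by
  rw [tri_eq_mul_max, tri_eq_mul_max, ← abs_neg]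
  ring_nf

theorem tri_eq_zero_of_nonpos {α β t : ℝ} (ht : t ≤ 0) : tri α β t = 0 := by
  rw [tri_eq_mul_max, max_eq_left, mul_zero]
  linarith [neg_abs_le (t - α)]

theorem tri_eq_zero_of_two_mul_le {α β t : ℝ} (ht : 2 * α ≤ t) : tri α β t = 0 := by
  rw [tri_eq_mul_max, max_eq_left, mul_zero]
  linarith [le_abs_self (t - α)]

open Finset

theorem triWave_two_mul_sub (k : ℕ) (α β t : ℝ) :
    triWave k α β (2 * k * α - t) = ∑ j ∈ Icc 1 (2 * (k : ℤ)), tri α β (t - 2 * α * (j - 1)) := by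
  refine sum_nbij' (fun i ↦ k + 1 - i) (fun j ↦ k + 1 - j) ?_ ?_ (by simp) (by simp) fun i _ ↦ ?_
  · intro i hi; simp only [mem_Icc] at hi ⊢; omega
  · intro j hj; simp only [mem_Icc] at hj ⊢; omega
  · rw [← tri_two_mul_sub]
    push_cast
    ring_nf

theorem tri_sub_eq_zero_of_index_nonpos {α β t : ℝ} (hα : 0 ≤ α) (ht : 0 ≤ t) {j : ℤ}
    (hj : j ≤ 0) : tri α β (t - 2 * α * (j - 1)) = 0 := by
  apply tri_eq_zero_of_two_mul_le
  have : (j : ℝ) ≤ 0 := by exact_mod_cast hj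
  nlinarith

theorem tri_sub_eq_zero_of_lt_index {k : ℕ} {α β t : ℝ} (hα : 0 ≤ α) (ht : t ≤ 2 * k * α)
    {j : ℤ} (hj : k < j) : tri α β (t - 2 * α * (j - 1)) = 0 := by
  apply tri_eq_zero_of_nonpos
  have : (k : ℝ) + 1 ≤ j := by exact_mod_cast hj
  nlinarith

theorem triWave_reflection_general (α β : ℝ) (hα : 0 < α) (k : ℕ) (t : ℝ)
    (ht : t ∈ Set.Icc 0 (2 * (k : ℝ) * α)) :
    triWave k α β (2 * (k : ℝ) * α - t) = triWave k α β t := by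
  rw [triWave_two_mul_sub]
  calc ∑ j ∈ Icc 1 (2 * (k : ℤ)), tri α β (t - 2 * α * (j - 1))
      = ∑ j ∈ Icc (-(k : ℤ) + 1) (2 * k), tri α β (t - 2 * α * (j - 1)) := by
        refine sum_subset (Icc_subset_Icc (by omega) le_rfl) fun j hj hj' ↦ ?_
        simp only [mem_Icc] at hj hj'
        exact tri_sub_eq_zero_of_index_nonpos hα.le ht.1 (by omega)
    _ = triWave k α β t := by
        refine (sum_subset (Icc_subset_Icc le_rfl (by omega)) fun j hj hj' ↦ ?_).symm
        simp only [mem_Icc] at hj hj'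
        exact tri_sub_eq_zero_of_lt_index hα.le ht.2 (by omega)

/-- **Symmetry of the triangle waveform (reflection part).** For `t ∈ [0, 2kα]`,
`T_k(2kα - t; α, β) = T_k(t; α, β)`. -/
theorem triWave_reflection (α β : ℝ) (hα : 0 < α) (hβ : 0 < β) (k : ℕ) (t : ℝ)
    (ht : t ∈ Set.Icc 0 (2 * (k : ℝ) * α)) :
    triWave k α β (2 * (k : ℝ) * α - t) = triWave k α β t :=
  triWave_reflection_general α β hα k t ht
end

section
/- Let ω > 0. For every t ∈ [0, π/ω], one has sin(ωt) = (π/2) ∫_0^1 ω sin(πS) [ (π/ω)(1 − S) − ReLU((π/ω)(1 − S) − t) − ReLU(t − πS/ω) ] dS. -/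
/-!
Writing `t = (π/ω) a` with `a ∈ [0, 1]`, positive homogeneity of ReLU turns the integrand into
`π sin(πS) ((1 - S) - ReLU(1 - a - S) - ReLU(a - S))`. Each term integrates in closed form,
`∫₀¹ ReLU(c - S) sin(πS) dS = c/π - sin(πc)/π²` for `c ∈ [0, 1]`: the linear parts cancel and,
since `sin(π(1 - a)) = sin(πa)`, what remains is `2 sin(πa)/π`.
-/

open Real

theorem integral_sub_mul_sin (k c : ℝ) (hk : k ≠ 0) :
    ∫ S in (0 : ℝ)..c, (c - S) * sin (k * S) = c / k - sin (k * c) / k ^ 2 := by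
  have hF (S : ℝ) : HasDerivAt (fun S => -(c - S) * cos (k * S) / k - sin (k * S) / k ^ 2)
      ((c - S) * sin (k * S)) S := by
    have hkS : HasDerivAt (fun S => k * S) k S := by simpa using (hasDerivAt_id S).const_mul k
    have h := ((((hasDerivAt_id S).const_sub c).neg.mul
      ((hasDerivAt_cos _).comp S hkS)).div_const k).sub
      (((hasDerivAt_sin _).comp S hkS).div_const (k ^ 2))
    refine h.congr_deriv ?_
    simp only [Function.comp_apply, id_eq, Pi.neg_apply, neg_sub, neg_neg, one_mul]
    field_simp
    ring
  rw [intervalIntegral.integral_eq_sub_of_hasDerivAt (fun S _ => hF S)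
    (Continuous.intervalIntegrable (by fun_prop) _ _)]
  simp only [sub_self, sub_zero, zero_div, mul_zero, cos_zero, sin_zero, mul_one]
  ring

theorem integral_max_sub_mul_sin (k b c : ℝ) (hk : k ≠ 0) (hc : c ∈ Set.Icc 0 b) :
    ∫ S in (0 : ℝ)..b, max 0 (c - S) * sin (k * S) = c / k - sin (k * c) / k ^ 2 := by
  have hcont : Continuous fun S => max 0 (c - S) * sin (k * S) := by fun_prop
  rw [← intervalIntegral.integral_add_adjacent_intervals (hcont.intervalIntegrable 0 c)
    (hcont.intervalIntegrable c b), ← integral_sub_mul_sin k c hk]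
  have hvanish : ∫ S in c..b, max 0 (c - S) * sin (k * S) = 0 := by
    rw [intervalIntegral.integral_congr (g := fun _ => 0), intervalIntegral.integral_zero]
    intro S hS
    rw [Set.uIcc_of_le hc.2] at hS
    simp [max_eq_left (sub_nonpos.2 hS.1)]
  rw [hvanish, add_zero]
  refine intervalIntegral.integral_congr fun S hS => ?_
  rw [Set.uIcc_of_le hc.1] at hS
  simp [max_eq_right (sub_nonneg.2 hS.2)]

/-- **ReLU integral representation of the sine.** For `ω > 0` and `t ∈ [0, π/ω]`,
`sin(ωt) = (π/2) ∫_0^1 ω sin(πS) [(π/ω)(1-S) - ReLU((π/ω)(1-S) - t) - ReLU(t - πS/ω)] dS`. -/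
theorem sin_relu_representation (ω : ℝ) (hω : 0 < ω) (t : ℝ)
    (ht : t ∈ Set.Icc (0 : ℝ) (π / ω)) :
    Real.sin (ω * t) =
      π / 2 * ∫ S in (0 : ℝ)..1,
        ω * Real.sin (π * S) *
          (π / ω * (1 - S) - max 0 (π / ω * (1 - S) - t) - max 0 (t - π * S / ω)) := by
  obtain ⟨a, ⟨ha0, ha1⟩, rfl⟩ : ∃ a ∈ Set.Icc (0 : ℝ) 1, t = π / ω * a := by
    refine ⟨ω * t / π, ⟨by have := ht.1; positivity, ?_⟩, by field_simp⟩
    rw [div_le_one pi_pos, ← le_div_iff₀' hω]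
    exact ht.2
  have hrelu (x : ℝ) : max 0 (π / ω * x) = π / ω * max 0 x := by
    rw [mul_max_of_nonneg _ _ (by positivity), mul_zero]
  have hscale (S : ℝ) : ω * sin (π * S) *
      (π / ω * (1 - S) - max 0 (π / ω * (1 - S) - π / ω * a) - max 0 (π / ω * a - π * S / ω)) =
      π * ((1 - S) * sin (π * S) - max 0 (1 - a - S) * sin (π * S)
        - max 0 (a - S) * sin (π * S)) := by
    rw [show π / ω * (1 - S) - π / ω * a = π / ω * (1 - a - S) by ring,
      show π / ω * a - π * S / ω = π / ω * (a - S) by ring, hrelu, hrelu]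
    field_simp
  simp_rw [hscale]
  rw [intervalIntegral.integral_const_mul, intervalIntegral.integral_sub,
    intervalIntegral.integral_sub, integral_sub_mul_sin π 1 pi_ne_zero,
    integral_max_sub_mul_sin π 1 (1 - a) pi_ne_zero ⟨by linarith, by linarith⟩,
    integral_max_sub_mul_sin π 1 a pi_ne_zero ⟨ha0, ha1⟩]
  · rw [show ω * (π / ω * a) = π * a by field_simp, show π * (1 - a) = π - π * a by ring,
      sin_pi_sub, mul_one, sin_pi]
    field_simp
    ring
  all_goals exact Continuous.intervalIntegrable (by fun_prop) _ _
end

section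
/- Let l ∈ ℕ with l ≥ 1, let γ > 0 and α₁ > 0, and for i ≥ 1 set α_i = α₁ (γ/(2l))^{i−1} and define f_i : ℝ → ℝ by f_i(t) = T_l(t; α_i, γ). Then for every m ≥ 1 and every t ∈ ℝ, the composition satisfies f_m ∘ f_{m−1} ∘ ⋯ ∘ f_1(t) = T_{2^{m−1} l^m}(t; α_m / γ^{m−1}, γ^m). -/
open Real
open scoped BigOperators

/-- `iterComp g m = g m ∘ g (m-1) ∘ ⋯ ∘ g 1`. -/
noncomputable def iterComp (g : ℕ → ℝ → ℝ) : ℕ → ℝ → ℝ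
  | 0 => id
  | m + 1 => g (m + 1) ∘ iterComp g m

/-!
After rescaling, `T_k(t; α, β) = αβ·W(t/α)` on `|t| ≤ 2αk` and `0` outside, where `W` is the
2-periodic tent: inside that window exactly one summand of `T_k` is active. Since `W` is even
and 2-periodic and `W x = ±(x - 2n)`, we get `W(c·W x) = W(c x)` for every integer `c`. With
`c = 2l` this turns the composition of two waveforms into a single waveform with `2l` times as
many teeth, and the theorem follows by induction on `m`.
-/

open Set

section Tri

variable {y : ℝ}

lemma tri_eq_mul_tri_one {α : ℝ} (hα : 0 < α) (β y : ℝ) :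
    tri α β (α * y) = α * β * tri 1 1 y := by
  unfold tri
  simp only [mul_le_iff_le_one_right hα, mul_nonneg_iff_of_pos_left hα,
    lt_mul_iff_one_lt_right hα, mul_comm (2 : ℝ) α, mul_le_mul_iff_right₀ hα, mul_one]
  split_ifs <;> ring

lemma tri_one_eq_zero (h : y ≤ 0 ∨ 2 ≤ y) : tri 1 1 y = 0 := by
  unfold tri
  grind

lemma tri_one_of_le_one (h₀ : 0 ≤ y) (h₁ : y ≤ 1) : tri 1 1 y = y := by
  simp [tri, h₀, h₁]

lemma tri_one_two_sub (y : ℝ) : tri 1 1 (2 - y) = tri 1 1 y := by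
  unfold tri
  grind

lemma tri_one_mem_Icc (y : ℝ) : tri 1 1 y ∈ Icc 0 1 := by
  unfold tri
  grind

end Tri

/-- The distance from `x` to `2ℤ`. -/
noncomputable def tent (x : ℝ) : ℝ := tri 1 1 (2 * Int.fract (x / 2))

lemma tent_periodic : Function.Periodic tent 2 := fun x => by
  simp only [tent, add_div, div_self (two_ne_zero' ℝ), Int.fract_add_one]

lemma tent_neg (x : ℝ) : tent (-x) = tent x := by
  unfold tent
  rw [neg_div]
  by_cases h : Int.fract (x / 2) = 0
  · rw [h, Int.fract_neg_eq_zero.mpr h]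
  · rw [Int.fract_neg h, ← tri_one_two_sub (2 * Int.fract (x / 2))]
    ring_nf

lemma tent_mem_Icc (x : ℝ) : tent x ∈ Icc 0 1 := tri_one_mem_Icc _

lemma tent_zero : tent 0 = 0 := by
  simp [tent, tri]

lemma tent_intCast_mul_tent (c : ℤ) (x : ℝ) : tent (c * tent x) = tent (c * x) := by
  set z := 2 * Int.fract (x / 2) with hz
  have hz₀ : 0 ≤ z := by positivity
  have hz₂ : z < 2 := by linarith [Int.fract_lt_one (x / 2)]
  have hx : c * x = c * z + ((c * ⌊x / 2⌋ : ℤ) : ℝ) * 2 := by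
    rw [hz, ← Int.self_sub_floor]; push_cast; ring
  have htent : tent x = tri 1 1 z := rfl
  rw [hx, tent_periodic.int_mul, htent]
  rcases le_or_gt z 1 with hz₁ | hz₁
  · rw [tri_one_of_le_one hz₀ hz₁]
  · rw [← tri_one_two_sub, tri_one_of_le_one (by linarith) (by linarith),
      show (c : ℝ) * (2 - z) = c * 2 - c * z by ring, tent_periodic.int_mul_sub_eq, tent_neg]

section TriWave

variable {k : ℕ} {x : ℝ}

lemma triWave_eq_mul_triWave_one {α : ℝ} (hα : 0 < α) (k : ℕ) (β t : ℝ) :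
    triWave k α β t = α * β * triWave k 1 1 (t / α) := by
  unfold triWave
  rw [Finset.mul_sum]
  refine Finset.sum_congr rfl fun i _ => ?_
  rw [← tri_eq_mul_tri_one hα]
  congr 1
  field_simp

/-- Only the summand with index `⌊x/2⌋ + 1` is active. -/
lemma triWave_one_of_abs_le (hx : |x| ≤ 2 * k) : triWave k 1 1 x = tent x := by
  obtain ⟨hx₁, hx₂⟩ := abs_le.mp hx
  set n := ⌊x / 2⌋
  have hz : 2 * Int.fract (x / 2) = x - 2 * n := by rw [← Int.self_sub_floor]; ring
  have hz₀ : 0 ≤ x - 2 * n := by rw [← hz]; positivity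
  have hz₂ : x - 2 * n < 2 := by rw [← hz]; linarith [Int.fract_lt_one (x / 2)]
  have hshift (i : ℤ) : x - 2 * 1 * ((i : ℝ) - 1) = x - 2 * n + 2 * ((n + 1 - i : ℤ) : ℝ) := by
    push_cast; ring
  unfold triWave tent
  rw [hz, Finset.sum_eq_single (n + 1)]
  · rw [hshift]; simp
  · intro i _ hi
    rw [hshift]
    apply tri_one_eq_zero
    rcases lt_or_gt_of_ne hi with h | h
    · right
      have : (1 : ℝ) ≤ ((n + 1 - i : ℤ) : ℝ) := by exact_mod_cast (by omega : (1 : ℤ) ≤ n + 1 - i)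
      linarith
    · left
      have : ((n + 1 - i : ℤ) : ℝ) ≤ -1 := by exact_mod_cast (by omega : n + 1 - i ≤ (-1 : ℤ))
      linarith
  · intro hn
    have hlo : -(k : ℤ) ≤ n := Int.le_floor.mpr (by push_cast; linarith)
    have hhi : n ≤ k := Int.floor_le_iff.mpr (by push_cast; linarith)
    have hnk : n = k := by rw [Finset.mem_Icc] at hn; omega
    rw [hshift, hnk]
    apply tri_one_eq_zero
    left
    push_cast
    linarith

lemma triWave_one_of_lt_abs (hx : 2 * k < |x|) : triWave k 1 1 x = 0 := by
  refine Finset.sum_eq_zero fun i hi => tri_one_eq_zero ?_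
  obtain ⟨hi₁, hi₂⟩ := Finset.mem_Icc.mp hi
  have hi₁' : -(k : ℝ) + 1 ≤ i := by exact_mod_cast hi₁
  have hi₂' : (i : ℝ) ≤ k := by exact_mod_cast hi₂
  rcases lt_abs.mp hx with h | h
  · right; linarith
  · left; linarith

lemma triWave_one_zero (k : ℕ) : triWave k 1 1 0 = 0 := by
  rw [triWave_one_of_abs_le (by simp), tent_zero]

/-- The amplitude factor `2L` makes the inner tent span exactly the window of the outer
waveform. -/
lemma triWave_one_comp (K L : ℕ) (x : ℝ) :
    triWave L 1 1 (2 * L * triWave K 1 1 x) = triWave (2 * K * L) 1 1 (2 * L * x) := by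
  have hL : (0 : ℝ) ≤ L := L.cast_nonneg
  rcases le_or_gt |x| (2 * K) with hx | hx
  · obtain ⟨h₀, h₁⟩ := tent_mem_Icc x
    have hin : |2 * L * tent x| ≤ 2 * L := by
      rw [abs_of_nonneg (by positivity)]; nlinarith
    have hout : |2 * L * x| ≤ 2 * ((2 * K * L : ℕ) : ℝ) := by
      rw [abs_mul, abs_of_nonneg (by positivity)]; push_cast; nlinarith
    rw [triWave_one_of_abs_le hx, triWave_one_of_abs_le hin, triWave_one_of_abs_le hout]
    exact_mod_cast tent_intCast_mul_tent (2 * L) x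
  · rcases hL.eq_or_lt with hL₀ | hLpos
    · obtain rfl : L = 0 := by exact_mod_cast hL₀.symm
      simp [triWave]
    have hout : 2 * ((2 * K * L : ℕ) : ℝ) < |2 * L * x| := by
      rw [abs_mul, abs_of_pos (by positivity)]; push_cast; nlinarith
    rw [triWave_one_of_lt_abs hx, mul_zero, triWave_one_zero, triWave_one_of_lt_abs hout]

lemma triWave_comp {L : ℕ} (hL : 1 ≤ L) (K : ℕ) {A B : ℝ} (hA : 0 < A) (hB : 0 < B) (γ t : ℝ) :
    triWave L (A * B / (2 * L)) γ (triWave K A B t) =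
      triWave (2 * K * L) (A / (2 * L)) (γ * B) t := by
  have hL' : (0 : ℝ) < L := by exact_mod_cast hL
  have hα : 0 < A * B / (2 * L) := by positivity
  have hα' : 0 < A / (2 * L) := by positivity
  rw [triWave_eq_mul_triWave_one hα, triWave_eq_mul_triWave_one hA,
    triWave_eq_mul_triWave_one hα' (2 * K * L),
    show A * B * triWave K 1 1 (t / A) / (A * B / (2 * L)) = 2 * L * triWave K 1 1 (t / A) by
      field_simp,
    triWave_one_comp, show t / (A / (2 * L)) = 2 * L * (t / A) by field_simp]
  ring

end TriWave

/-- **Iterated composition of triangle waveforms.** With `α_i = α₁ (γ/(2l))^{i-1}` and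
`f_i(t) = T_l(t; α_i, γ)`, for every `m ≥ 1` and every `t ∈ ℝ` we have
`f_m ∘ ⋯ ∘ f_1(t) = T_{2^{m-1} l^m}(t; α_m / γ^{m-1}, γ^m)`. -/
theorem iterComp_triWave (l : ℕ) (hl : 1 ≤ l) (γ α₁ : ℝ) (hγ : 0 < γ) (hα₁ : 0 < α₁)
    (αf : ℕ → ℝ) (hαf : ∀ i : ℕ, 1 ≤ i → αf i = α₁ * (γ / (2 * l)) ^ (i - 1))
    (f : ℕ → ℝ → ℝ) (hf : ∀ i t, f i t = triWave l (αf i) γ t)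
    (m : ℕ) (hm : 1 ≤ m) (t : ℝ) :
    iterComp f m t = triWave (2 ^ (m - 1) * l ^ m) (αf m / γ ^ (m - 1)) (γ ^ m) t := by
  have hl' : (0 : ℝ) < l := by exact_mod_cast hl
  have hscale (n : ℕ) : αf (n + 1) / γ ^ n = α₁ / (2 * l) ^ n := by
    rw [hαf _ (by omega), Nat.add_sub_cancel, div_pow]
    field_simp
  obtain ⟨n, rfl⟩ : ∃ n, m = n + 1 := ⟨m - 1, by omega⟩
  clear hm
  rw [Nat.add_sub_cancel, hscale]
  induction n with
  | zero => simp [iterComp, hf, hαf 1 le_rfl]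
  | succ n ih =>
    have hα : αf (n + 2) = α₁ / (2 * l) ^ n * γ ^ (n + 1) / (2 * l) := by
      rw [hαf _ (by omega), show n + 2 - 1 = n + 1 by omega, div_pow]
      field_simp
      ring
    show f (n + 2) (iterComp f (n + 1) t) = _
    rw [ih, hf, hα, triWave_comp hl _ (by positivity) (by positivity)]
    congr 1 <;> ring
end
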